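/- Assume the deletion scenario. Let t, u ∈ V(E) be mutually visible with respect to E (the obstacle set after the deletion of v). Then t and u are mutually visible with respect to E₁ = (E \ {[vᵢ, vᵢ₊₁]}) ∪ {[v, vᵢ], [v, vᵢ₊₁]} (the obstacle set before the deletion) if and only if openSegment ℝ t u is disjoint from T. (This is the claim of Section 5.2 of the paper: the visibility-graph edges created by deleting the vertex v are exactly the pairs of vertices, mutually visible afterwards, whose open segment intersects the triangle v vᵢ vᵢ₊₁.) -/

import Mathlib

/-!
The sides lie in `T`, which gives `←`. For `→`, suppose `(t, u)` meets `T`. It misses the base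
(contained in `⋃₀ E`) and both sides, hence the frontier of the triangle `T`. Both `t` and `u`
cannot lie in `T`: they would lie in `T ∩ ⋃₀ E`, the base, and so would `(t, u)`. So the connected
set `(t, u)` meets both the closed set `T` and its complement, hence meets `frontier T`.
-/

open Set

/-- Points of the plane. -/
abbrev Pt := EuclideanSpace ℝ (Fin 2)

/-- `x` is an endpoint of the (nondegenerate) closed segment `s`. -/
def IsSegEndpoint (x : Pt) (s : Set Pt) : Prop :=
  ∃ a b : Pt, a ≠ b ∧ s = segment ℝ a b ∧ (x = a ∨ x = b)

/-- An obstacle set: a finite set of nondegenerate closed segments such that any two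
distinct segments intersect at most in a point that is a common endpoint of both. -/
def IsObstacleSet (E : Set (Set Pt)) : Prop :=
  E.Finite ∧
  (∀ s ∈ E, ∃ a b : Pt, a ≠ b ∧ s = segment ℝ a b) ∧
  (∀ s ∈ E, ∀ t ∈ E, s ≠ t → ∀ x ∈ s ∩ t, IsSegEndpoint x s ∧ IsSegEndpoint x t)

/-- `V(E)`: the set of all endpoints of segments of `E`. -/
def Vset (E : Set (Set Pt)) : Set Pt := {x | ∃ s ∈ E, IsSegEndpoint x s}

/-- Two points `p ≠ q` are mutually visible with respect to `E` if the open segment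
joining them is disjoint from every segment of `E`. -/
def MutuallyVisible (E : Set (Set Pt)) (p q : Pt) : Prop :=
  p ≠ q ∧ ∀ s ∈ E, openSegment ℝ p q ∩ s = ∅

/-- The cone at `q` spanned by `a` and `b`. -/
def Cone (q a b : Pt) : Set Pt :=
  {x | ∃ s t : ℝ, 0 ≤ s ∧ 0 ≤ t ∧ x = q + s • (a - q) + t • (b - q)}

theorem IsPreconnected.inter_frontier_nonempty {X : Type*} [TopologicalSpace X] {s t : Set X}
    (hs : IsPreconnected s) (hst : (s ∩ t).Nonempty) (hst' : (s \ t).Nonempty) :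
    (s ∩ frontier t).Nonempty := by
  by_contra h
  have hcover : s ⊆ interior t ∪ (closure t)ᶜ := fun x hx => by
    by_contra hx'
    simp only [mem_union, mem_compl_iff, not_or, not_not] at hx'
    exact h ⟨x, hx, hx'.2, hx'.1⟩
  obtain ⟨x, -, hxi, hxc⟩ := hs _ _ isOpen_interior isClosed_closure.isOpen_compl hcover
    (hst.mono fun x hx => ⟨hx.1, (hcover hx.1).resolve_right (· (subset_closure hx.2))⟩)
    (hst'.mono fun x hx => ⟨hx.1, (hcover hx.1).resolve_left (hx.2 <| interior_subset ·)⟩)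
  exact hxc (subset_closure (interior_subset hxi))

theorem AffineBasis.frontier_convexHull_subset {ι V : Type*} [Fintype ι] [NormedAddCommGroup V]
    [NormedSpace ℝ V] (b : AffineBasis ι ℝ V) :
    frontier (convexHull ℝ (range b)) ⊆ ⋃ i, convexHull ℝ (b '' {i}ᶜ) := by
  intro x hx
  rw [(finite_range b).isClosed_convexHull (𝕜 := ℝ) |>.frontier_eq, b.interior_convexHull,
    b.convexHull_eq_nonneg_coord] at hx
  obtain ⟨hnonneg, hnotpos⟩ := hx
  simp only [mem_ofPred_eq, not_forall, not_lt] at hnotpos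
  obtain ⟨i, hi⟩ := hnotpos
  have hmem := (convex_convexHull ℝ (b '' {i}ᶜ)).finsum_mem (w := (b.coord · x)) (z := b)
    hnonneg (by rw [finsum_eq_sum_of_fintype, b.sum_coord_apply_eq_one]) fun j hj =>
      subset_convexHull ℝ _ <| mem_image_of_mem b <| mem_compl_singleton_iff.2 fun hji =>
        hj (hji ▸ le_antisymm hi (hnonneg i))
  rw [finsum_eq_sum_of_fintype, b.linear_combination_coord_eq_self] at hmem
  exact mem_iUnion.2 ⟨i, hmem⟩

theorem frontier_convexHull_triangle_subset {V : Type*} [NormedAddCommGroup V] [NormedSpace ℝ V]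
    [FiniteDimensional ℝ V] (hV : Module.finrank ℝ V = 2) {a b c : V}
    (habc : AffineIndependent ℝ ![a, b, c]) :
    frontier (convexHull ℝ {a, b, c}) ⊆ segment ℝ b c ∪ segment ℝ a c ∪ segment ℝ a b := by
  let B : AffineBasis (Fin 3) ℝ V :=
    ⟨![a, b, c], habc, by rw [habc.affineSpan_eq_top_iff_card_eq_finrank_add_one]; simp [hV]⟩
  have hB : ⇑B = ![a, b, c] := rfl
  have hface : ∀ i, B '' {i}ᶜ = ![{b, c}, {a, c}, {a, b}] i := by
    intro i
    ext x
    fin_cases i <;> simp [hB, Fin.exists_fin_succ, eq_comm]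
  have hrange : range B = {a, b, c} := by
    ext x; simp [hB, Matrix.range_cons, Matrix.range_empty, eq_comm]; tauto
  refine hrange ▸ B.frontier_convexHull_subset |>.trans (iUnion_subset fun i => ?_)
  fin_cases i <;> intro x hx <;> simp_all [convexHull_pair]

theorem IsClosed.openSegment_inter_frontier_nonempty {E : Type*} [AddCommGroup E] [Module ℝ E]
    [TopologicalSpace E] [IsTopologicalAddGroup E] [ContinuousSMul ℝ E] {T : Set E}
    (hT : IsClosed T) {t u : E} (hmeet : (openSegment ℝ t u ∩ T).Nonempty) (hu : u ∉ T) :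
    (openSegment ℝ t u ∩ frontier T).Nonempty := by
  refine (convex_openSegment t u).isPreconnected.inter_frontier_nonempty hmeet ?_
  obtain ⟨y, hyT, hy⟩ := mem_closure_iff.1 (segment_subset_closure_openSegment
    (right_mem_segment ℝ t u)) Tᶜ hT.isOpen_compl hu
  exact ⟨y, hy, hyT⟩

theorem Vset_subset_sUnion (E : Set (Set Pt)) : Vset E ⊆ ⋃₀ E := by
  rintro x ⟨s, hs, a, b, -, rfl, rfl | rfl⟩
  exacts [⟨_, hs, left_mem_segment ℝ x b⟩, ⟨_, hs, right_mem_segment ℝ a x⟩]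

theorem MutuallyVisible.disjoint_sUnion {E : Set (Set Pt)} {p q : Pt}
    (h : MutuallyVisible E p q) : Disjoint (openSegment ℝ p q) (⋃₀ E) :=
  disjoint_sUnion_right.2 fun s hs => disjoint_iff_inter_eq_empty.2 (h.2 s hs)

theorem stmt_8_general
    (E : Set (Set Pt)) (v vi vi1 : Pt)
    (hind : AffineIndependent ℝ ![v, vi, vi1])
    (hT : convexHull ℝ ({v, vi, vi1} : Set Pt) ∩ ⋃₀ E = segment ℝ vi vi1)
    (t u : Pt) (ht : t ∈ Vset E) (hu : u ∈ Vset E)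
    (htu : MutuallyVisible E t u) :
    MutuallyVisible ((E \ {segment ℝ vi vi1}) ∪ {segment ℝ v vi, segment ℝ v vi1}) t u ↔
      openSegment ℝ t u ∩ convexHull ℝ ({v, vi, vi1} : Set Pt) = ∅ := by
  set T := convexHull ℝ ({v, vi, vi1} : Set Pt)
  have hbase : segment ℝ vi vi1 ⊆ ⋃₀ E := hT ▸ inter_subset_right
  constructor
  · rintro ⟨-, hvis⟩
    have hfrontier : Disjoint (openSegment ℝ t u) (frontier T) :=
      (((htu.disjoint_sUnion.mono_right hbase).union_right
        (disjoint_iff_inter_eq_empty.2 (hvis _ (by simp)))).union_right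
        (disjoint_iff_inter_eq_empty.2 (hvis _ (by simp)))).mono_right
        (frontier_convexHull_triangle_subset finrank_euclideanSpace_fin hind)
    refine not_nonempty_iff_eq_empty.1 fun hmeet => ?_
    have hout : t ∉ T ∨ u ∉ T := by
      by_contra! hin
      obtain ⟨x, hx, -⟩ := hmeet
      have htb : t ∈ segment ℝ vi vi1 := hT ▸ ⟨hin.1, Vset_subset_sUnion E ht⟩
      have hub : u ∈ segment ℝ vi vi1 := hT ▸ ⟨hin.2, Vset_subset_sUnion E hu⟩
      exact htu.disjoint_sUnion.ne_of_mem hx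
        (hbase ((convex_segment _ _).openSegment_subset htb hub hx)) rfl
    have hclosed : IsClosed T := (toFinite _).isClosed_convexHull (𝕜 := ℝ)
    rcases hout with hout | hout
    · rw [openSegment_symm] at hmeet hfrontier
      exact (hclosed.openSegment_inter_frontier_nonempty hmeet hout).ne_empty hfrontier.inter_eq
    · exact (hclosed.openSegment_inter_frontier_nonempty hmeet hout).ne_empty hfrontier.inter_eq
  · intro hdisj
    refine ⟨htu.1, ?_⟩
    rintro s (⟨hs, -⟩ | rfl | rfl)
    · exact htu.2 s hs
    all_goals exact subset_empty_iff.1 <|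
      hdisj ▸ inter_subset_inter_right _ (segment_subset_convexHull (by simp) (by simp))

theorem stmt_8
    (E : Set (Set Pt)) (v vi vi1 : Pt)
    (hind : AffineIndependent ℝ ![v, vi, vi1])
    (hE : IsObstacleSet E)
    (hbase : segment ℝ vi vi1 ∈ E)
    (hT : convexHull ℝ ({v, vi, vi1} : Set Pt) ∩ ⋃₀ E = segment ℝ vi vi1)
    (t u : Pt) (ht : t ∈ Vset E) (hu : u ∈ Vset E)
    (htu : MutuallyVisible E t u) :
    MutuallyVisible ((E \ {segment ℝ vi vi1}) ∪ {segment ℝ v vi, segment ℝ v vi1}) t u ↔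
      openSegment ℝ t u ∩ convexHull ℝ ({v, vi, vi1} : Set Pt) = ∅ :=
  stmt_8_general E v vi vi1 hind hT t u ht hu htu
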